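/- arXiv:0902.2645 — 6 statements merged into one kernel-verified Lean document; each statement's English description precedes it below -/
import Mathlib

section
/- Let n ≥ 1 and ε > 0. There exist positive constants κ₁ and κ₂ depending only on n (and independent of ε) such that for every u ∈ ℝⁿ one has (κ₂/ε)·F_ε(u) ≤ ‖g_ε(u)‖² ≤ (κ₁/ε)·F_ε(u), where ‖·‖ is the Euclidean norm. -/
noncomputable def fe (ε z : ℝ) : ℝ := if z ≤ ε then 0 else ε⁻¹ * (z - ε) ^ 2

noncomputable def fe' (ε z : ℝ) : ℝ := if z ≤ ε then 0 else 2 * ε⁻¹ * (z - ε)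

noncomputable def Fe (n : ℕ) (ε : ℝ) (u : EuclideanSpace ℝ (Fin n)) : ℝ :=
  fe ε (∑ i, u i - 1) + ∑ i, fe ε (-(u i))

noncomputable def ge (n : ℕ) (ε : ℝ) (u : EuclideanSpace ℝ (Fin n)) :
    EuclideanSpace ℝ (Fin n) :=
  WithLp.toLp 2 (fun i => fe' ε (∑ j, u j - 1) - fe' ε (-(u i)))

/-!
Write `a = f'_ε(∑ uⱼ - 1)` and `bᵢ = f'_ε(-uᵢ)`. Then `‖g_ε(u)‖² = ∑ᵢ (a - bᵢ)²`, while
`f'_ε² = 4 ε⁻¹ f_ε` gives `F_ε(u) = (ε / 4) (a² + ∑ᵢ bᵢ²)`, so both bounds reduce to comparing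
`∑ᵢ (a - bᵢ)²` with `a² + ∑ᵢ bᵢ²`. The upper bound is `(a - b)² ≤ 2a² + 2b²`. For the lower one,
`(a - bᵢ)² ≥ bᵢ² / 2 - a²` controls the `bᵢ`, and `a² ≤ ∑ᵢ (a - bᵢ)²` holds because `a > 0` forces
`∑ uⱼ > 1`, hence some `uⱼ > 0` and `bⱼ = 0`.
-/

open Finset

section SumSq

variable {ι : Type*} [Fintype ι]

theorem sum_sub_sq_le (a : ℝ) (b : ι → ℝ) :
    ∑ i, (a - b i) ^ 2 ≤ 2 * (Fintype.card ι + 1) * (a ^ 2 + ∑ i, b i ^ 2) := by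
  have hS : 0 ≤ ∑ i, b i ^ 2 := sum_nonneg fun i _ => sq_nonneg (b i)
  calc ∑ i, (a - b i) ^ 2 ≤ ∑ i, (2 * a ^ 2 + 2 * b i ^ 2) :=
        sum_le_sum fun i _ => by nlinarith [sq_nonneg (a + b i)]
    _ = 2 * Fintype.card ι * a ^ 2 + 2 * ∑ i, b i ^ 2 := by
        rw [sum_add_distrib, sum_const, card_univ, nsmul_eq_mul, ← mul_sum]; ring
    _ ≤ 2 * (Fintype.card ι + 1) * (a ^ 2 + ∑ i, b i ^ 2) := by nlinarith [sq_nonneg a]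

theorem sq_add_sum_sq_le (a : ℝ) (b : ι → ℝ) (h : a = 0 ∨ ∃ j, b j = 0) :
    a ^ 2 + ∑ i, b i ^ 2 ≤ (2 * Fintype.card ι + 3) * ∑ i, (a - b i) ^ 2 := by
  have hT : 0 ≤ ∑ i, (a - b i) ^ 2 := sum_nonneg fun i _ => sq_nonneg _
  have ha : a ^ 2 ≤ ∑ i, (a - b i) ^ 2 := by
    rcases h with rfl | ⟨j, hj⟩
    · simpa using hT
    · calc a ^ 2 = (a - b j) ^ 2 := by rw [hj, sub_zero]
        _ ≤ ∑ i, (a - b i) ^ 2 :=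
          single_le_sum (f := fun i => (a - b i) ^ 2) (fun i _ => sq_nonneg _) (mem_univ j)
  have hb : (∑ i, b i ^ 2) / 2 - Fintype.card ι * a ^ 2 ≤ ∑ i, (a - b i) ^ 2 := by
    calc (∑ i, b i ^ 2) / 2 - Fintype.card ι * a ^ 2 = ∑ i, (b i ^ 2 / 2 - a ^ 2) := by
          rw [sum_sub_distrib, sum_const, card_univ, nsmul_eq_mul, sum_div]
      _ ≤ ∑ i, (a - b i) ^ 2 := sum_le_sum fun i _ => by nlinarith [sq_nonneg (2 * a - b i)]
  nlinarith

end SumSq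

theorem fe'_sq (ε z : ℝ) : fe' ε z ^ 2 = 4 * ε⁻¹ * fe ε z := by
  unfold fe fe'
  split <;> ring

theorem fe'_eq_zero_of_le {ε z : ℝ} (h : z ≤ ε) : fe' ε z = 0 := if_pos h

theorem fe'_eq_zero_or_exists_fe'_neg_eq_zero {n : ℕ} {ε : ℝ} (hε : 0 ≤ ε)
    (u : EuclideanSpace ℝ (Fin n)) :
    fe' ε (∑ j, u j - 1) = 0 ∨ ∃ j, fe' ε (-u j) = 0 := by
  by_cases hs : ∑ j, u j - 1 ≤ ε
  · exact .inl (fe'_eq_zero_of_le hs)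
  · obtain ⟨j, -, hj⟩ : ∃ j ∈ univ, (0 : ℝ) < u j :=
      exists_lt_of_sum_lt (by rw [sum_const_zero]; linarith)
    exact .inr ⟨j, fe'_eq_zero_of_le (by linarith)⟩

theorem norm_ge_sq (n : ℕ) (ε : ℝ) (u : EuclideanSpace ℝ (Fin n)) :
    ‖ge n ε u‖ ^ 2 = ∑ i, (fe' ε (∑ j, u j - 1) - fe' ε (-u i)) ^ 2 := by
  rw [EuclideanSpace.norm_eq, Real.sq_sqrt (by positivity)]
  simp only [Real.norm_eq_abs, sq_abs]
  rfl

theorem Fe_eq_mul_fe'_sq (n : ℕ) {ε : ℝ} (hε : ε ≠ 0) (u : EuclideanSpace ℝ (Fin n)) :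
    Fe n ε u = ε / 4 * (fe' ε (∑ j, u j - 1) ^ 2 + ∑ i, fe' ε (-u i) ^ 2) := by
  simp only [Fe, fe'_sq, ← mul_sum]
  field_simp

theorem stmt_0_general (n : ℕ) :
    ∃ κ₁ κ₂ : ℝ, 0 < κ₁ ∧ 0 < κ₂ ∧
      ∀ ε : ℝ, 0 < ε → ∀ u : EuclideanSpace ℝ (Fin n),
        (κ₂ / ε) * Fe n ε u ≤ ‖ge n ε u‖ ^ 2 ∧
        ‖ge n ε u‖ ^ 2 ≤ (κ₁ / ε) * Fe n ε u := by
  refine ⟨8 * (n + 1), 4 / (2 * n + 3), by positivity, by positivity, fun ε hε u => ?_⟩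
  rw [norm_ge_sq, Fe_eq_mul_fe'_sq n hε.ne']
  set a := fe' ε (∑ j, u j - 1)
  set b := fun i => fe' ε (-u i)
  have hlow := sq_add_sum_sq_le a b (fe'_eq_zero_or_exists_fe'_neg_eq_zero hε.le u)
  have hup := sum_sub_sq_le a b
  rw [Fintype.card_fin] at hlow hup
  constructor
  · calc 4 / (2 * n + 3) / ε * (ε / 4 * (a ^ 2 + ∑ i, b i ^ 2))
        = (a ^ 2 + ∑ i, b i ^ 2) / (2 * n + 3) := by field_simp
      _ ≤ ∑ i, (a - b i) ^ 2 := by rw [div_le_iff₀ (by positivity)]; linarith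
  · calc ∑ i, (a - b i) ^ 2 ≤ 2 * (n + 1) * (a ^ 2 + ∑ i, b i ^ 2) := hup
      _ = 8 * (n + 1) / ε * (ε / 4 * (a ^ 2 + ∑ i, b i ^ 2)) := by field_simp; ring

theorem stmt_0 (n : ℕ) (hn : 1 ≤ n) :
    ∃ κ₁ κ₂ : ℝ, 0 < κ₁ ∧ 0 < κ₂ ∧
      ∀ ε : ℝ, 0 < ε → ∀ u : EuclideanSpace ℝ (Fin n),
        (κ₂ / ε) * Fe n ε u ≤ ‖ge n ε u‖ ^ 2 ∧
        ‖ge n ε u‖ ^ 2 ≤ (κ₁ / ε) * Fe n ε u :=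
  stmt_0_general n
end

section
/- Let n ≥ 1, let g : ℝ → ℝ be monotone nondecreasing, and let u, v ∈ ℝⁿ. Then −(g(∑ᵢ uᵢ) − g(∑ᵢ vᵢ)) · (∑ᵢ sgn(uᵢ − vᵢ)) ≤ (n − 1)·|g(∑ᵢ uᵢ) − g(∑ᵢ vᵢ)|, where sgn denotes the sign function with sgn(0) = 0, sgn(t) = 1 for t > 0 and sgn(t) = −1 for t < 0. -/
/-!
Write `S = ∑ᵢ sgn(uᵢ - vᵢ)` and `D = g(∑ᵢ uᵢ) - g(∑ᵢ vᵢ)`. If the differences `uᵢ - vᵢ` do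
not all have the same weak sign, one summand of `S` is `≤ 0` and another is `≥ 0`, so
`|S| ≤ n - 1` and `-(D S) ≤ |D| |S|` suffices. Otherwise `∑ᵢ uᵢ` and `∑ᵢ vᵢ` compare in the
same direction as every pair `uᵢ`, `vᵢ`, so monotonicity of `g` gives `D` the sign of `S` and
the left-hand side is `≤ 0`.
-/

open Finset

namespace Real

theorem sign_le_one (r : ℝ) : sign r ≤ 1 := by
  rcases sign_apply_eq r with h | h | h <;> rw [h] <;> norm_num

theorem sign_nonpos {r : ℝ} (hr : r ≤ 0) : sign r ≤ 0 := by
  rcases hr.lt_or_eq with h | h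
  · rw [sign_of_neg h]; norm_num
  · rw [h, sign_zero]

theorem sign_nonneg {r : ℝ} (hr : 0 ≤ r) : 0 ≤ sign r := by
  simpa [sign_neg] using sign_nonpos (neg_nonpos.2 hr)

end Real

section SumSign

variable {ι : Type*} {s : Finset ι} {x : ι → ℝ} {i : ι}

theorem sum_sign_le_card_sub_one (hi : i ∈ s) (hxi : x i ≤ 0) :
    ∑ j ∈ s, Real.sign (x j) ≤ #s - 1 := by
  classical
  rw [← sum_erase_add s _ hi]
  have hrest : ∑ j ∈ s.erase i, Real.sign (x j) ≤ #(s.erase i) := by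
    simpa using sum_le_sum fun j (_ : j ∈ s.erase i) => Real.sign_le_one (x j)
  rw [card_erase_of_mem hi, Nat.cast_sub (card_pos.2 ⟨i, hi⟩), Nat.cast_one] at hrest
  linarith [Real.sign_nonpos hxi]

theorem one_sub_card_le_sum_sign (hi : i ∈ s) (hxi : 0 ≤ x i) :
    1 - #s ≤ ∑ j ∈ s, Real.sign (x j) := by
  have := sum_sign_le_card_sub_one (x := -x) hi (neg_nonpos.2 hxi)
  simp only [Pi.neg_apply, Real.sign_neg, sum_neg_distrib] at this
  linarith

theorem abs_sum_sign_le_card_sub_one {j : ι} (hi : i ∈ s) (hj : j ∈ s) (hxi : x i ≤ 0)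
    (hxj : 0 ≤ x j) : |∑ k ∈ s, Real.sign (x k)| ≤ #s - 1 :=
  abs_le.2 ⟨by linarith [one_sub_card_le_sum_sign hj hxj], sum_sign_le_card_sub_one hi hxi⟩

theorem Monotone.sub_mul_sum_sign_nonneg {g : ℝ → ℝ} (hg : Monotone g) {u v : ι → ℝ}
    (h : (∀ i ∈ s, v i ≤ u i) ∨ ∀ i ∈ s, u i ≤ v i) :
    0 ≤ (g (∑ i ∈ s, u i) - g (∑ i ∈ s, v i)) * ∑ i ∈ s, Real.sign (u i - v i) := by
  rcases h with h | h
  · exact mul_nonneg (sub_nonneg.2 (hg (sum_le_sum h)))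
      (sum_nonneg fun i hi => Real.sign_nonneg (sub_nonneg.2 (h i hi)))
  · exact mul_nonneg_of_nonpos_of_nonpos (sub_nonpos.2 (hg (sum_le_sum h)))
      (sum_nonpos fun i hi => Real.sign_nonpos (sub_nonpos.2 (h i hi)))

end SumSign

theorem stmt_1 (n : ℕ) (hn : 1 ≤ n) (g : ℝ → ℝ) (hg : Monotone g)
    (u v : Fin n → ℝ) :
    -((g (∑ i, u i) - g (∑ i, v i)) * (∑ i, Real.sign (u i - v i))) ≤
      ((n : ℝ) - 1) * |g (∑ i, u i) - g (∑ i, v i)| := by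
  by_cases hsame : (∀ i ∈ univ, v i ≤ u i) ∨ ∀ i ∈ univ, u i ≤ v i
  · have hn' : (0 : ℝ) ≤ n - 1 := sub_nonneg.2 (by exact_mod_cast hn)
    exact (neg_nonpos.2 (hg.sub_mul_sum_sign_nonneg hsame)).trans
      (mul_nonneg hn' (abs_nonneg _))
  · push Not at hsame
    obtain ⟨⟨i, -, hi⟩, ⟨j, -, hj⟩⟩ := hsame
    have hS := abs_sum_sign_le_card_sub_one (x := u - v) (mem_univ i) (mem_univ j)
      (sub_nonpos.2 hi.le) (sub_nonneg.2 hj.le)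
    rw [card_univ, Fintype.card_fin] at hS
    set D := g (∑ i, u i) - g (∑ i, v i)
    calc -(D * ∑ i, Real.sign (u i - v i))
        ≤ |D| * |∑ i, Real.sign (u i - v i)| := by rw [← abs_mul]; exact neg_le_abs _
      _ ≤ |D| * (n - 1) := by gcongr; exact hS
      _ = (n - 1) * |D| := mul_comm _ _
end

section
/- Let n ≥ 1 and set θ(n) := (n + 1 − √((n+1)² − 4))/4. Let a ≥ 0 and let c₁, …, cₙ be nonnegative reals such that a > 0 implies cⱼ = 0 for at least one index j. Then ∑_{i=1}^{n} (a − cᵢ)² ≥ θ(n)·(a² + ∑_{i=1}^{n} cᵢ²). -/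
noncomputable def theta (n : ℕ) : ℝ :=
  ((n : ℝ) + 1 - Real.sqrt (((n : ℝ) + 1) ^ 2 - 4)) / 4

/-!
Since `c j = 0` (or `a = 0`), completing the square gives, for `t := 1 - θ`,
`a² ≤ ∑ᵢ (a - t cᵢ)² = ∑ᵢ (t ((a - cᵢ)² - θ cᵢ²) + θ a²)`.
Rearranged, `t · (∑ᵢ (a - cᵢ)² - θ (a² + ∑ᵢ cᵢ²)) ≥ a² (1 - (n + 1) θ + θ²)`, which is
nonnegative as soon as `(n + 1) θ ≤ 1`. For `θ(n)`, the smaller root of `4θ² - 2(n+1)θ + 1`,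
this holds because `θ(n) = 1 / (n + 1 + √((n+1)² - 4))`.
-/

theorem add_one_mul_theta_le_one {n : ℕ} (hn : 1 ≤ n) : ((n : ℝ) + 1) * theta n ≤ 1 := by
  set x : ℝ := (n : ℝ) + 1
  have hx : 2 ≤ x := by
    have : (1 : ℝ) ≤ n := by exact_mod_cast hn
    linarith
  set s := Real.sqrt (x ^ 2 - 4)
  have hs0 : 0 ≤ s := Real.sqrt_nonneg _
  have hs : s ^ 2 = x ^ 2 - 4 := Real.sq_sqrt (by nlinarith)
  have hrecip : (x + s) * theta n = 1 := by
    change (x + s) * ((x - s) / 4) = 1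
    linear_combination (-1 / 4 : ℝ) * hs
  have htheta : 0 ≤ theta n := by
    by_contra! h
    nlinarith
  nlinarith [mul_nonneg hs0 htheta]

theorem sq_le_sum_sq_sub_mul {ι : Type*} [Fintype ι] (a t : ℝ) (c : ι → ℝ)
    (h : a = 0 ∨ ∃ j, c j = 0) : a ^ 2 ≤ ∑ i, (a - t * c i) ^ 2 := by
  rcases h with rfl | ⟨j, hj⟩
  · simpa using Finset.sum_nonneg fun i _ => sq_nonneg (0 - t * c i)
  · calc a ^ 2 = (a - t * c j) ^ 2 := by rw [hj, mul_zero, sub_zero]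
      _ ≤ ∑ i, (a - t * c i) ^ 2 :=
        Finset.single_le_sum (fun i _ => sq_nonneg (a - t * c i)) (Finset.mem_univ j)

theorem mul_add_sum_sq_le_sum_sq_sub {ι : Type*} [Fintype ι] {θ a : ℝ} (c : ι → ℝ)
    (hθ : θ < 1) (hθcard : (Fintype.card ι + 1) * θ ≤ 1)
    (hsq : a ^ 2 ≤ ∑ i, (a - (1 - θ) * c i) ^ 2) :
    θ * (a ^ 2 + ∑ i, c i ^ 2) ≤ ∑ i, (a - c i) ^ 2 := by
  have hsplit : ∑ i, (a - (1 - θ) * c i) ^ 2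
      = ∑ i, ((1 - θ) * ((a - c i) ^ 2 - θ * c i ^ 2) + θ * a ^ 2) :=
    Finset.sum_congr rfl fun i _ => by ring
  rw [Finset.sum_add_distrib, ← Finset.mul_sum, Finset.sum_sub_distrib, ← Finset.mul_sum,
    Finset.sum_const, Finset.card_univ, nsmul_eq_mul] at hsplit
  have hkey : 0 ≤ (1 - θ) * (∑ i, (a - c i) ^ 2 - θ * (a ^ 2 + ∑ i, c i ^ 2)) := by
    nlinarith [mul_nonneg (sub_nonneg.2 hθcard) (sq_nonneg a), sq_nonneg (θ * a)]
  linarith [(mul_nonneg_iff_of_pos_left (sub_pos.2 hθ)).1 hkey]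

theorem stmt_3_general (n : ℕ) (hn : 1 ≤ n) (a : ℝ) (ha : 0 ≤ a) (c : Fin n → ℝ)
    (hvanish : 0 < a → ∃ j, c j = 0) :
    ∑ i, (a - c i) ^ 2 ≥ theta n * (a ^ 2 + ∑ i, (c i) ^ 2) := by
  have hθcard := add_one_mul_theta_le_one hn
  have hθ : theta n < 1 := by
    have : (2 : ℝ) ≤ n + 1 := by
      have : (1 : ℝ) ≤ n := by exact_mod_cast hn
      linarith
    nlinarith
  have hzero : a = 0 ∨ ∃ j, c j = 0 := by
    rcases ha.eq_or_lt with h | h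
    · exact .inl h.symm
    · exact .inr (hvanish h)
  refine mul_add_sum_sq_le_sum_sq_sub c hθ ?_ (sq_le_sum_sq_sub_mul a _ c hzero)
  simpa using hθcard

theorem stmt_3 (n : ℕ) (hn : 1 ≤ n) (a : ℝ) (ha : 0 ≤ a) (c : Fin n → ℝ)
    (hc : ∀ i, 0 ≤ c i) (hvanish : 0 < a → ∃ j, c j = 0) :
    ∑ i, (a - c i) ^ 2 ≥ theta n * (a ^ 2 + ∑ i, (c i) ^ 2) :=
  stmt_3_general n hn a ha c hvanish
end

section
/- Let n ≥ 1. There exists a constant C depending only on n such that for every ε ∈ (0,1] and every u ∈ ℝⁿ, ‖u‖ ≤ F_ε(u) + C, where ‖·‖ is the Euclidean norm. -/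
/-!
For `ε ≤ 1` the penalty `f_ε z` dominates `(z - ε)²` beyond `ε`, hence every linear function
`a (z - ε) - a² / 4` with `a ≥ 0`, uniformly in `ε`. Bounding `‖u‖` by `∑ |uᵢ|`, the negative
parts of the coordinates are paid for by the terms `f_ε (-uᵢ)` (slope `2`) and the remaining
`∑ uᵢ` by `f_ε (∑ uᵢ - 1)` (slope `1`).
-/

lemma EuclideanSpace.norm_le_sum_norm {ι : Type*} [Fintype ι] (u : EuclideanSpace ℝ ι) :
    ‖u‖ ≤ ∑ i, ‖u i‖ := by
  refine (pow_le_pow_iff_left₀ (norm_nonneg u) (by positivity) two_ne_zero).mp ?_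
  rw [EuclideanSpace.norm_sq_eq]
  exact Finset.sum_sq_le_sq_sum_of_nonneg fun i _ => norm_nonneg (u i)

lemma fe_nonneg {ε : ℝ} (hε : 0 ≤ ε) (z : ℝ) : 0 ≤ fe ε z := by
  unfold fe
  split_ifs <;> positivity

lemma mul_sub_sub_le_fe {ε a : ℝ} (hε : 0 < ε) (hε1 : ε ≤ 1) (ha : 0 ≤ a) (z : ℝ) :
    a * (z - ε) - a ^ 2 / 4 ≤ fe ε z := by
  unfold fe
  split_ifs with hz
  · nlinarith
  · have hsq : (z - ε) ^ 2 ≤ ε⁻¹ * (z - ε) ^ 2 :=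
      le_mul_of_one_le_left (sq_nonneg _) (one_le_inv₀ hε |>.mpr hε1)
    nlinarith [sq_nonneg (z - ε - a / 2)]

lemma abs_le_add_fe_neg {ε : ℝ} (hε : 0 < ε) (hε1 : ε ≤ 1) (x : ℝ) :
    |x| ≤ x + fe ε (-x) + 3 := by
  have h := mul_sub_sub_le_fe hε hε1 zero_le_two (-x)
  rcases abs_cases x with ⟨hx, -⟩ | ⟨hx, -⟩
  · linarith [fe_nonneg hε.le (-x)]
  · linarith

theorem stmt_9_general (n : ℕ) :
    ∃ C : ℝ, ∀ ε ∈ Set.Ioc (0 : ℝ) 1, ∀ u : EuclideanSpace ℝ (Fin n),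
      ‖u‖ ≤ Fe n ε u + C := by
  refine ⟨3 * n + 3, ?_⟩
  rintro ε ⟨hε, hε1⟩ u
  have hsum : ∑ i, u i ≤ fe ε (∑ i, u i - 1) + 3 := by
    linarith [mul_sub_sub_le_fe hε hε1 zero_le_one (∑ i, u i - 1)]
  have hcoords : ∑ i, |u i| ≤ ∑ i, u i + ∑ i, fe ε (-u i) + 3 * n := by
    calc ∑ i, |u i| ≤ ∑ i, (u i + fe ε (-u i) + 3) :=
          Finset.sum_le_sum fun i _ => abs_le_add_fe_neg hε hε1 (u i)
      _ = ∑ i, u i + ∑ i, fe ε (-u i) + 3 * n := by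
          simp only [Finset.sum_add_distrib, Finset.sum_const, Finset.card_univ,
            Fintype.card_fin, nsmul_eq_mul, mul_comm]
  have hnorm : ‖u‖ ≤ ∑ i, |u i| := by
    simpa only [Real.norm_eq_abs] using EuclideanSpace.norm_le_sum_norm u
  unfold Fe
  linarith

theorem stmt_9 (n : ℕ) (hn : 1 ≤ n) :
    ∃ C : ℝ, ∀ ε ∈ Set.Ioc (0 : ℝ) 1, ∀ u : EuclideanSpace ℝ (Fin n),
      ‖u‖ ≤ Fe n ε u + C :=
  stmt_9_general n
end

section
/- Let n ≥ 1, ε > 0, p > 0 and u ∈ ℝⁿ with F_ε(u) ≤ pε. Then uᵢ ≥ −(1 + √p)·ε for every i = 1,…,n, and ∑ᵢ uᵢ ≤ 1 + (1 + √p)·ε. -/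
lemma le_of_fe_le {ε p z : ℝ} (hε : 0 < ε) (hp : 0 ≤ p) (h : fe ε z ≤ p * ε) :
    z ≤ (1 + Real.sqrt p) * ε := by
  unfold fe at h
  split_ifs at h with hz
  · nlinarith [Real.sqrt_nonneg p]
  · have hsq : (z - ε) ^ 2 ≤ (Real.sqrt p * ε) ^ 2 := by
      rw [mul_pow, Real.sq_sqrt hp]
      rw [inv_mul_le_iff₀ hε] at h
      nlinarith
    linarith [(abs_le_of_sq_le_sq' hsq (by positivity)).2]

lemma fe_sum_sub_one_le_Fe {n : ℕ} {ε : ℝ} (hε : 0 ≤ ε) (u : EuclideanSpace ℝ (Fin n)) :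
    fe ε (∑ i, u i - 1) ≤ Fe n ε u :=
  le_add_of_nonneg_right (Finset.sum_nonneg fun _ _ => fe_nonneg hε _)

lemma fe_neg_le_Fe {n : ℕ} {ε : ℝ} (hε : 0 ≤ ε) (u : EuclideanSpace ℝ (Fin n)) (i : Fin n) :
    fe ε (-(u i)) ≤ Fe n ε u :=
  calc fe ε (-(u i)) ≤ ∑ j, fe ε (-(u j)) :=
        Finset.single_le_sum (f := fun j => fe ε (-(u j)))
          (fun _ _ => fe_nonneg hε _) (Finset.mem_univ i)
    _ ≤ Fe n ε u := le_add_of_nonneg_left (fe_nonneg hε _)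

theorem stmt_11_general (n : ℕ) (ε p : ℝ) (hε : 0 < ε) (hp : 0 < p)
    (u : EuclideanSpace ℝ (Fin n)) (h : Fe n ε u ≤ p * ε) :
    (∀ i, -((1 + Real.sqrt p) * ε) ≤ u i) ∧
      ∑ i, u i ≤ 1 + (1 + Real.sqrt p) * ε := by
  constructor
  · intro i
    have := le_of_fe_le hε hp.le ((fe_neg_le_Fe hε.le u i).trans h)
    linarith
  · have := le_of_fe_le hε hp.le ((fe_sum_sub_one_le_Fe hε.le u).trans h)
    linarith

theorem stmt_11 (n : ℕ) (hn : 1 ≤ n) (ε p : ℝ) (hε : 0 < ε) (hp : 0 < p)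
    (u : EuclideanSpace ℝ (Fin n)) (h : Fe n ε u ≤ p * ε) :
    (∀ i, -((1 + Real.sqrt p) * ε) ≤ u i) ∧
      ∑ i, u i ≤ 1 + (1 + Real.sqrt p) * ε :=
  stmt_11_general n ε p hε hp u h
end

section
/- Let n ≥ 1, let C be a nonempty closed convex subset of ℝⁿ, let δ > 0, and define M : ℝⁿ → ℝ by M(z) := (dist(z, C))³ − δ³. Then M is differentiable at every point z ∈ ℝⁿ, and the Euclidean norm of its gradient satisfies ‖∇M(z)‖ = 3·(dist(z, C))² = 3·(M(z) + δ³)^{2/3}. -/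
/-!
Let `p` be the nearest point of `C` to `z`, characterised by `⟪z - p, c - p⟫ ≤ 0` for all
`c ∈ C`. Expanding squares gives the two-sided bound
`‖y - p‖² - ‖y - z‖² ≤ (infDist y C)² ≤ ‖y - p‖²`, so `(infDist · C)²` differs from the smooth
function `‖· - p‖²` by `O(‖y - z‖²)` and has gradient `2 (z - p)` at `z`, on `C` as well as
off it. Writing `infDist³ = (infDist²)^(3/2)`, where `t ↦ t^(3/2)` is differentiable also at
`0`, the chain rule gives the gradient `3 ‖z - p‖ (z - p)`, of norm `3 (infDist z C)²`.
-/

open Metric Filter Topology InnerProductSpace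

section

variable {F : Type*} [NormedAddCommGroup F] [InnerProductSpace ℝ F]

theorem norm_sub_sq_sub_norm_sub_sq_le_of_inner_nonpos {z p c : F}
    (h : ⟪z - p, c - p⟫_ℝ ≤ 0) (y : F) :
    ‖y - p‖ ^ 2 - ‖y - c‖ ^ 2 ≤ ‖y - z‖ ^ 2 := by
  have hyc : y - c = (y - z - (c - p)) + (z - p) := by abel
  have hyp : y - p = (y - z) + (z - p) := by abel
  generalize y - z = a, z - p = b, c - p = e at *
  rw [hyc, hyp, norm_add_sq_real, norm_add_sq_real, inner_sub_left, real_inner_comm b e]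
  nlinarith [sq_nonneg ‖a - e‖]

theorem sq_infDist_bounds {C : Set F} {z p : F} (hp : p ∈ C)
    (hobtuse : ∀ c ∈ C, ⟪z - p, c - p⟫_ℝ ≤ 0) (y : F) :
    ‖y - p‖ ^ 2 - ‖y - z‖ ^ 2 ≤ infDist y C ^ 2 ∧ infDist y C ^ 2 ≤ ‖y - p‖ ^ 2 := by
  have hle : infDist y C ≤ ‖y - p‖ := by
    simpa [dist_eq_norm] using infDist_le_dist_of_mem (x := y) hp
  refine ⟨?_, pow_le_pow_left₀ infDist_nonneg hle 2⟩
  by_contra! hlt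
  rw [← Real.lt_sqrt infDist_nonneg, infDist_lt_iff ⟨p, hp⟩] at hlt
  obtain ⟨c, hc, hyc⟩ := hlt
  rw [dist_eq_norm, Real.lt_sqrt (norm_nonneg _)] at hyc
  linarith [norm_sub_sq_sub_norm_sub_sq_le_of_inner_nonpos (hobtuse c hc) y]

theorem infDist_eq_norm_sub_of_inner_nonpos {C : Set F} {z p : F} (hp : p ∈ C)
    (hobtuse : ∀ c ∈ C, ⟪z - p, c - p⟫_ℝ ≤ 0) : infDist z C = ‖z - p‖ := by
  have h := sq_infDist_bounds hp hobtuse z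
  rw [sub_self, norm_zero] at h
  exact (pow_left_inj₀ infDist_nonneg (norm_nonneg _) two_ne_zero).mp (by linarith [h.1, h.2])

variable [CompleteSpace F]

theorem hasGradientAt_sq_infDist {C : Set F} {z p : F} (hp : p ∈ C)
    (hobtuse : ∀ c ∈ C, ⟪z - p, c - p⟫_ℝ ≤ 0) :
    HasGradientAt (fun y => infDist y C ^ 2) ((2 : ℝ) • (z - p)) z := by
  have hgap : (fun y => ‖y - p‖ ^ 2 - infDist y C ^ 2) =O[𝓝 z] fun y => ‖y - z‖ ^ 2 := by
    refine Asymptotics.IsBigO.of_bound 1 (Eventually.of_forall fun y => ?_)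
    have h := sq_infDist_bounds hp hobtuse y
    rw [Real.norm_of_nonneg (by linarith), Real.norm_of_nonneg (by positivity)]
    linarith
  have hsq : HasFDerivAt (fun y => ‖y - p‖ ^ 2) _ z := ((hasFDerivAt_id z).sub_const p).norm_sq
  rw [hasGradientAt_iff_hasFDerivAt]
  refine ((hsq.sub (hgap.hasFDerivAt one_lt_two)).congr_fderiv ?_).congr_of_eventuallyEq
    (Eventually.of_forall fun y => ?_)
  · ext h
    simp [InnerProductSpace.toDual_apply_apply]
  · simp

theorem hasGradientAt_infDist_pow_three {C : Set F} {z p : F} (hp : p ∈ C)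
    (hobtuse : ∀ c ∈ C, ⟪z - p, c - p⟫_ℝ ≤ 0) :
    HasGradientAt (fun y => infDist y C ^ 3) ((3 * ‖z - p‖) • (z - p)) z := by
  have sq_rpow : ∀ {t : ℝ}, 0 ≤ t → ∀ r : ℝ, (t ^ 2) ^ r = t ^ (2 * r) := fun ht r => by
    rw [← Real.rpow_natCast, ← Real.rpow_mul ht, Nat.cast_ofNat]
  have hcube : (fun y => infDist y C ^ 3) = fun y => (infDist y C ^ 2) ^ (3 / 2 : ℝ) := by
    funext y
    rw [sq_rpow infDist_nonneg]
    norm_num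
  have hout : HasDerivAt (fun x : ℝ => x ^ (3 / 2 : ℝ)) (3 / 2 * ‖z - p‖) (infDist z C ^ 2) := by
    convert Real.hasDerivAt_rpow_const (Or.inr (by norm_num : (1 : ℝ) ≤ 3 / 2)) using 1
    rw [infDist_eq_norm_sub_of_inner_nonpos hp hobtuse, sq_rpow (norm_nonneg _)]
    norm_num
  have hcomp := hout.comp_hasFDerivAt z
    (hasGradientAt_iff_hasFDerivAt.mp (hasGradientAt_sq_infDist hp hobtuse))
  rw [hcube, hasGradientAt_iff_hasFDerivAt]
  refine hcomp.congr_fderiv ?_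
  rw [← map_smul, smul_smul]
  congr 2
  ring

theorem exists_mem_forall_real_inner_sub_nonpos {C : Set F} (hne : C.Nonempty)
    (hclosed : IsClosed C) (hconv : Convex ℝ C) (z : F) :
    ∃ p ∈ C, ∀ c ∈ C, ⟪z - p, c - p⟫_ℝ ≤ 0 := by
  obtain ⟨p, hp, hmin⟩ := exists_norm_eq_iInf_of_complete_convex hne hclosed.isComplete hconv z
  exact ⟨p, hp, (norm_eq_iInf_iff_real_inner_le_zero hconv hp).mp hmin⟩

end

theorem stmt_16_general (n : ℕ) (C : Set (EuclideanSpace ℝ (Fin n)))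
    (hne : C.Nonempty) (hclosed : IsClosed C) (hconv : Convex ℝ C)
    (δ : ℝ) :
    ∀ z : EuclideanSpace ℝ (Fin n), ∃ g : EuclideanSpace ℝ (Fin n),
      HasGradientAt (fun y => (Metric.infDist y C) ^ 3 - δ ^ 3) g z ∧
      ‖g‖ = 3 * (Metric.infDist z C) ^ 2 ∧
      ‖g‖ = 3 * (((Metric.infDist z C) ^ 3 - δ ^ 3 + δ ^ 3) ^ ((2 : ℝ) / 3)) := by
  intro z
  obtain ⟨p, hp, hobtuse⟩ := exists_mem_forall_real_inner_sub_nonpos hne hclosed hconv z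
  have hnorm : ‖(3 * ‖z - p‖) • (z - p)‖ = 3 * infDist z C ^ 2 := by
    rw [norm_smul, infDist_eq_norm_sub_of_inner_nonpos hp hobtuse,
      Real.norm_of_nonneg (by positivity)]
    ring
  refine ⟨_, (hasGradientAt_infDist_pow_three hp hobtuse).sub_const (δ ^ 3), hnorm, ?_⟩
  rw [hnorm, sub_add_cancel, ← Real.rpow_natCast (infDist z C) 3, ← Real.rpow_mul infDist_nonneg]
  norm_num

theorem stmt_16 (n : ℕ) (hn : 1 ≤ n) (C : Set (EuclideanSpace ℝ (Fin n)))
    (hne : C.Nonempty) (hclosed : IsClosed C) (hconv : Convex ℝ C)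
    (δ : ℝ) (hδ : 0 < δ) :
    ∀ z : EuclideanSpace ℝ (Fin n), ∃ g : EuclideanSpace ℝ (Fin n),
      HasGradientAt (fun y => (Metric.infDist y C) ^ 3 - δ ^ 3) g z ∧
      ‖g‖ = 3 * (Metric.infDist z C) ^ 2 ∧
      ‖g‖ = 3 * (((Metric.infDist z C) ^ 3 - δ ^ 3 + δ ^ 3) ^ ((2 : ℝ) / 3)) :=
  stmt_16_general n C hne hclosed hconv δ
end
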